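/- arXiv:1802.02419 — 2 statements merged into one kernel-verified Lean document; each statement's English description precedes it below -/
import Mathlib

section
/- Let L_1, …, L_N be pairwise non-associated irreducible polynomials in K[x_1,…,x_M], let c_1, …, c_N ∈ K, and let r ∈ K(x_1,…,x_M) be a rational function such that ∂_j r = Σ_{l=1}^N c_l (∂_j L_l)/L_l for every j = 1, …, M. Then c_l = 0 for every l, and r is a constant, i.e. r ∈ K. -/
/-!
Write `r = a / b` in lowest terms. If `c_l ≠ 0`, choose `j` with `L_l ∤ ∂_j L_l`: otherwise
every `∂_j L_l` vanishes (a polynomial dividing its own `x_j`-derivative has too large an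
`x_j`-degree), and `L_l` would be constant. Clearing denominators gives
`(b ∂_j a - a ∂_j b) ∏ L = b² S_j` with `S_j ≡ c_l ∂_j L_l ∏_{l' ≠ l} L_{l'}` modulo `L_l`.
If `L_l ∣ b`, the left side is divisible by a smaller power of `L_l` than the right side;
otherwise `L_l ∣ S_j`, which contradicts `c_l ≠ 0`. So all `c_l` vanish and `∂_j r = 0` for
every `j`. Then `b ∣ a ∂_j b`, hence `b ∣ ∂_j b`, so `∂_j b = 0`, then `∂_j a = 0`, and `r` is
constant.
-/

open MvPolynomial

noncomputable section

/-- `K(x_1,…,x_M)`, the field of rational functions in the invariants. -/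
abbrev FX (K : Type*) [Field K] (M : ℕ) : Type _ :=
  FractionRing (MvPolynomial (Fin M) K)

namespace MvPolynomial

variable {σ R : Type*}

section CommSemiring

variable [CommSemiring R] {p : MvPolynomial σ R} {i : σ}

theorem add_single_mem_support_of_mem_support_pderiv {m : σ →₀ ℕ}
    (hm : m ∈ (pderiv i p).support) : m + Finsupp.single i 1 ∈ p.support := by
  rw [mem_support_iff, coeff_pderiv] at hm
  exact mem_support_iff.2 (left_ne_zero_of_mul hm)

theorem degreeOf_pderiv_lt (h : pderiv i p ≠ 0) : degreeOf i (pderiv i p) < degreeOf i p := by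
  have hle : ∀ m ∈ (pderiv i p).support, m i + 1 ≤ degreeOf i p := fun m hm => by
    simpa using le_degreeOf_of_mem_support i (add_single_mem_support_of_mem_support_pderiv hm)
  obtain ⟨m, hm⟩ := support_nonempty.2 h
  have hpos := hle m hm
  have hlt : degreeOf i (pderiv i p) ≤ degreeOf i p - 1 :=
    degreeOf_le_iff.2 fun m hm => Nat.le_sub_one_of_lt (hle m hm)
  omega

theorem pderiv_eq_zero_of_dvd [NoZeroDivisors R] (h : p ∣ pderiv i p) : pderiv i p = 0 := by
  by_contra hne
  obtain ⟨u, hu⟩ := h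
  have hdeg := degreeOf_pderiv_lt hne
  rw [hu, degreeOf_mul_eq (left_ne_zero_of_mul (hu ▸ hne)) (right_ne_zero_of_mul (hu ▸ hne))]
    at hdeg
  omega

theorem coeff_eq_zero_of_pderiv_eq_zero [NoZeroDivisors R] [CharZero R] (h : pderiv i p = 0)
    {m : σ →₀ ℕ} (hm : m i ≠ 0) : coeff m p = 0 := by
  have hcoeff := coeff_pderiv (i := i) p (m - Finsupp.single i 1)
  rw [h, coeff_zero, tsub_add_cancel_of_le (Finsupp.single_le_iff.2 (Nat.one_le_iff_ne_zero.2 hm))]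
    at hcoeff
  exact (mul_eq_zero.1 hcoeff.symm).resolve_right (Nat.cast_add_one_ne_zero _)

theorem eq_C_of_forall_pderiv_eq_zero [NoZeroDivisors R] [CharZero R]
    (h : ∀ i, pderiv i p = 0) : p = C (coeff 0 p) := by
  rw [← totalDegree_eq_zero_iff_eq_C, totalDegree_eq_zero_iff]
  intro m hm i
  by_contra hmi
  exact mem_support_iff.1 hm (coeff_eq_zero_of_pderiv_eq_zero (h i) hmi)

end CommSemiring

theorem exists_not_dvd_pderiv_of_irreducible {K : Type*} [Field K] [CharZero K]
    {p : MvPolynomial σ K} (hp : Irreducible p) : ∃ i, ¬ p ∣ pderiv i p := by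
  by_contra! h
  have hC := eq_C_of_forall_pderiv_eq_zero fun i => pderiv_eq_zero_of_dvd (h i)
  refine hp.not_isUnit (hC ▸ (IsUnit.mk0 _ fun h0 => hp.ne_zero ?_).map C)
  rw [hC, h0, C_0]

end MvPolynomial

namespace Derivation

variable {A R : Type*} [CommRing A] [CommRing R] [Algebra A R] (D : Derivation A R R)

theorem mul_sub_mul_pow_mul (a p b : R) (k : ℕ) :
    p ^ (k + 1) * b * D a - a * D (p ^ (k + 1) * b)
      = p ^ k * (p * (b * D a - a * D b) - (k + 1) * (a * D p * b)) := by
  rw [leibniz, leibniz_pow, smul_eq_mul, smul_eq_mul, nsmul_eq_mul, Nat.add_sub_cancel]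
  push_cast
  ring

/-- If `a / b` is reduced and `D (a / b) = S / (p * Q)` with `p ∤ Q`, then `p ∣ S`: a pole of
order `n ≥ 1` of `a / b` along `p` would give `D (a / b)` a pole of order `n + 1`. -/
theorem prime_dvd_of_mul_sub_mul_mul_eq [IsDomain R] [WfDvdMonoid R] [Algebra ℚ R]
    {p Q a b S : R} (hp : Prime p) (hDp : ¬ p ∣ D p) (hQ : ¬ p ∣ Q) (hab : IsRelPrime a b)
    (hb : b ≠ 0)
    (h : (b * D a - a * D b) * (p * Q) = b ^ 2 * S) : p ∣ S := by
  by_cases hpb : p ∣ b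
  · exfalso
    obtain ⟨n, b, hpb₁, rfl⟩ := WfDvdMonoid.max_power_factor hb hp.irreducible
    obtain ⟨k, rfl⟩ : ∃ k, n = k + 1 :=
      Nat.exists_eq_add_one.2 (Nat.pos_of_ne_zero fun hn => hpb₁ (by simpa [hn] using hpb))
    have hpa : ¬ p ∣ a := fun hpa => hp.not_isUnit (hab hpa hpb)
    set u := p * (b * D a - a * D b) - (k + 1) * (a * D p * b)
    have hu : u * Q = p ^ (k + 1) * (b ^ 2 * S) := by
      apply mul_left_cancel₀ (pow_ne_zero (k + 1) hp.ne_zero)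
      rw [mul_sub_mul_pow_mul] at h
      linear_combination h
    have hpu : p ∣ u := (hp.dvd_or_dvd
      (hu ▸ dvd_mul_of_dvd_left (dvd_pow_self p k.succ_ne_zero) _)).resolve_right hQ
    have hpk : p ∣ (k + 1 : R) * (a * D p * b) := (dvd_sub_right (dvd_mul_right _ _)).1 hpu
    have hk : IsUnit (k + 1 : R) := by
      simpa using (IsUnit.mk0 (k + 1 : ℚ) (by positivity)).map (algebraMap ℚ R)
    rw [hp.dvd_mul, hp.dvd_mul, hp.dvd_mul] at hpk
    rcases hpk with hpk | (hpa' | hpDp) | hpb'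
    exacts [hp.not_isUnit (isUnit_of_dvd_unit hpk hk), hpa hpa', hDp hpDp, hpb₁ hpb']
  · exact (hp.dvd_or_dvd (h ▸ dvd_mul_of_dvd_right (dvd_mul_right p Q) _)).resolve_left
      fun h2 => hpb (hp.dvd_of_dvd_pow h2)

end Derivation

theorem Derivation.map_algebraMap_div_mul_sq {A R F : Type*} [CommRing A] [CommRing R] [Field F]
    [Algebra A F] [Algebra R F] (D : Derivation A F F) {d : R → R}
    (hD : ∀ x, D (algebraMap R F x) = algebraMap R F (d x)) (a : R) {b : R}
    (hb : algebraMap R F b ≠ 0) :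
    D (algebraMap R F a / algebraMap R F b) * algebraMap R F b ^ 2
      = algebraMap R F (b * d a - a * d b) := by
  rw [Derivation.leibniz_div, hD, hD, smul_eq_mul, smul_eq_mul, smul_eq_mul, inv_pow, mul_comm,
    ← mul_assoc, mul_inv_cancel₀ (pow_ne_zero 2 hb), one_mul, map_sub, map_mul, map_mul]

namespace Finset

variable {ι : Type*} [DecidableEq ι] {s : Finset ι}

theorem sum_div_mul_prod {F : Type*} [Field F] (f g : ι → F) (hg : ∀ i ∈ s, g i ≠ 0) :
    (∑ i ∈ s, f i / g i) * ∏ i ∈ s, g i = ∑ i ∈ s, f i * ∏ j ∈ s.erase i, g j := by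
  rw [sum_mul]
  refine sum_congr rfl fun i hi => ?_
  rw [← mul_prod_erase s g hi]
  field_simp [hg i hi]

theorem dvd_sum_mul_prod_erase_sub {R : Type*} [CommRing R] (f L : ι → R) {i : ι}
    (hi : i ∈ s) :
    L i ∣ ∑ l ∈ s, f l * ∏ l' ∈ s.erase l, L l' - f i * ∏ l' ∈ s.erase i, L l' := by
  rw [← add_sum_erase s _ hi, add_sub_cancel_left]
  exact dvd_sum fun l hl => dvd_mul_of_dvd_right
    (dvd_prod_of_mem L (mem_erase.2 ⟨(ne_of_mem_erase hl).symm, hi⟩)) _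

end Finset

open Finset

section RationalFunctions

variable {σ K : Type*} [Field K]
  (der : σ → Derivation K (FractionRing (MvPolynomial σ K)) (FractionRing (MvPolynomial σ K)))

theorem eq_algebraMap_of_forall_der_eq_zero [CharZero K]
    (hder : ∀ j (p : MvPolynomial σ K),
      der j (algebraMap _ _ p) = algebraMap _ (FractionRing (MvPolynomial σ K)) (pderiv j p))
    {r : FractionRing (MvPolynomial σ K)} (h : ∀ j, der j r = 0) :
    ∃ k : K, r = algebraMap K _ k := by
  obtain ⟨a, b, hab, rfl⟩ := IsFractionRing.exists_reduced_fraction (MvPolynomial σ K) r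
  rw [IsFractionRing.mk'_eq_div] at h ⊢
  have hb : (b : MvPolynomial σ K) ≠ 0 := nonZeroDivisors.coe_ne_zero b
  have hcross (j : σ) : (b : MvPolynomial σ K) * pderiv j a = a * pderiv j b := by
    have := (der j).map_algebraMap_div_mul_sq (hder j) a
      (IsFractionRing.to_map_ne_zero_of_mem_nonZeroDivisors b.2)
    rwa [h j, zero_mul, eq_comm, map_eq_zero_iff _ (IsFractionRing.injective _ _),
      sub_eq_zero] at this
  have hdb (j : σ) : pderiv j (b : MvPolynomial σ K) = 0 :=
    pderiv_eq_zero_of_dvd (hab.symm.dvd_of_dvd_mul_left ⟨_, (hcross j).symm⟩)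
  have hda (j : σ) : pderiv j a = 0 := by simpa [hdb j, hb] using hcross j
  refine ⟨coeff 0 a / coeff 0 (b : MvPolynomial σ K), ?_⟩
  rw [eq_C_of_forall_pderiv_eq_zero hda, eq_C_of_forall_pderiv_eq_zero hdb, ← algebraMap_eq,
    ← IsScalarTower.algebraMap_apply, ← IsScalarTower.algebraMap_apply, map_div₀]
  simp

theorem mul_prod_eq_sq_mul_of_der_eq_sum
    (hder : ∀ j (p : MvPolynomial σ K),
      der j (algebraMap _ _ p) = algebraMap _ (FractionRing (MvPolynomial σ K)) (pderiv j p))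
    {ι : Type*} [Fintype ι] [DecidableEq ι] {L : ι → MvPolynomial σ K} (hL : ∀ l, L l ≠ 0)
    (c : ι → K) (a : MvPolynomial σ K) {b : MvPolynomial σ K} (hb : b ≠ 0) (j : σ)
    (h : der j (algebraMap _ _ a / algebraMap _ _ b) = ∑ l, algebraMap K _ (c l) *
      (algebraMap _ _ (pderiv j (L l)) / algebraMap _ (FractionRing (MvPolynomial σ K)) (L l))) :
    (b * pderiv j a - a * pderiv j b) * ∏ l, L l
      = b ^ 2 * ∑ l, C (c l) * pderiv j (L l) * ∏ l' ∈ univ.erase l, L l' := by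
  have hinj := IsFractionRing.injective (MvPolynomial σ K) (FractionRing (MvPolynomial σ K))
  apply hinj
  rw [map_mul, ← (der j).map_algebraMap_div_mul_sq (hder j) a
    ((map_ne_zero_iff _ hinj).2 hb), h, map_mul, map_pow, map_prod, map_sum]
  simp_rw [map_mul, map_prod, ← mul_div_assoc]
  rw [mul_right_comm, mul_comm,
    sum_div_mul_prod _ _ fun l _ => (map_ne_zero_iff _ hinj).2 (hL l)]
  simp [IsScalarTower.algebraMap_apply K (MvPolynomial σ K) (FractionRing (MvPolynomial σ K))]

theorem coeff_eq_zero_of_der_eq_sum_dlog [CharZero K]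
    (hder : ∀ j (p : MvPolynomial σ K),
      der j (algebraMap _ _ p) = algebraMap _ (FractionRing (MvPolynomial σ K)) (pderiv j p))
    {ι : Type*} [Fintype ι] {L : ι → MvPolynomial σ K} (hLirr : ∀ l, Irreducible (L l))
    (hLass : ∀ l l', l ≠ l' → ¬ Associated (L l) (L l')) {c : ι → K}
    {r : FractionRing (MvPolynomial σ K)}
    (hr : ∀ j, der j r = ∑ l, algebraMap K _ (c l) *
      (algebraMap _ _ (pderiv j (L l)) / algebraMap _ (FractionRing (MvPolynomial σ K)) (L l)))
    (l : ι) : c l = 0 := by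
  classical
  by_contra hcl
  have hp : Prime (L l) := (hLirr l).prime
  obtain ⟨j, hj⟩ := exists_not_dvd_pderiv_of_irreducible (hLirr l)
  have hQ : ¬ L l ∣ ∏ l' ∈ univ.erase l, L l' := by
    rw [hp.dvd_finsetProd_iff]
    rintro ⟨l', hl', hdvd⟩
    exact hLass l l' (ne_of_mem_erase hl').symm ((hLirr l).associated_of_dvd (hLirr l') hdvd)
  obtain ⟨a, b, hab, rfl⟩ := IsFractionRing.exists_reduced_fraction (MvPolynomial σ K) r
  rw [IsFractionRing.mk'_eq_div] at hr
  have hb : (b : MvPolynomial σ K) ≠ 0 := nonZeroDivisors.coe_ne_zero b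
  have hcleared :=
    mul_prod_eq_sq_mul_of_der_eq_sum der hder (fun l => (hLirr l).ne_zero) c a hb j (hr j)
  rw [← mul_prod_erase _ L (mem_univ l)] at hcleared
  have hS := (pderiv j).prime_dvd_of_mul_sub_mul_mul_eq hp hj hQ hab hb hcleared
  have hresidue := (dvd_sub_right hS).1 (dvd_sum_mul_prod_erase_sub _ L (mem_univ l))
  rw [hp.dvd_mul, hp.dvd_mul] at hresidue
  rcases hresidue with (hC | hd) | hq
  · exact hp.not_isUnit (isUnit_of_dvd_unit hC ((IsUnit.mk0 _ hcl).map C))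
  · exact hj hd
  · exact hQ hq

end RationalFunctions

/-- If a rational function `r ∈ K(x_1,…,x_M)` satisfies
`∂_j r = Σ_l c_l (∂_j L_l)/L_l` for all `j`, where the `L_l` are pairwise non-associated
irreducible polynomials, then all `c_l` vanish and `r` is a constant. -/
theorem dlog_rational_constant
    {K : Type*} [Field K] [CharZero K] {M N : ℕ}
    -- the derivations `∂ j` of `K(x_1,…,x_M)`, extending `∂/∂x_j` on the polynomial ring
    (der : Fin M → Derivation K (FX K M) (FX K M))
    (hder : ∀ (j : Fin M) (p : MvPolynomial (Fin M) K),
      der j (algebraMap (MvPolynomial (Fin M) K) (FX K M) p)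
        = algebraMap (MvPolynomial (Fin M) K) (FX K M) (pderiv j p))
    -- the letters: pairwise non-associated irreducible polynomials
    (L : Fin N → MvPolynomial (Fin M) K)
    (hLirr : ∀ l, Irreducible (L l))
    (hLass : ∀ l l', l ≠ l' → ¬ Associated (L l) (L l'))
    (c : Fin N → K) (r : FX K M)
    (hr : ∀ j, der j r = ∑ l, algebraMap K (FX K M) (c l) *
      (algebraMap (MvPolynomial (Fin M) K) (FX K M) (pderiv j (L l))
        / algebraMap (MvPolynomial (Fin M) K) (FX K M) (L l))) :
    (∀ l, c l = 0) ∧ ∃ k : K, r = algebraMap K (FX K M) k := by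
  have hc : ∀ l, c l = 0 := coeff_eq_zero_of_der_eq_sum_dlog der hder hLirr hLass hr
  refine ⟨hc, eq_algebraMap_of_forall_der_eq_zero der hder fun j => ?_⟩
  simp [hr j, hc]
end
end

section
/- (Leinartas' theorem) Let f = p/q be a rational function in K(x_1,…,x_d) with p, q ∈ K[X] and let q = q_1^{e_1} ⋯ q_m^{e_m} be the factorization of q into pairwise non-associated irreducible polynomials. Then f can be written as a finite sum f = Σ_S p_S / ∏_{i∈S} q_i^{b_{S,i}}, where the sum runs over subsets S ⊆ {1,…,m}, each p_S ∈ K[X], each b_{S,i} is a positive integer, and for every S occurring in the sum: the polynomials {q_i | i ∈ S} have a common zero in K̄^d and are algebraically independent over K. -/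
/-!
Decompositions of the required shape form a `K[X]`-submodule of the fraction field (two terms
with the same `S` are put over a common denominator), so it suffices to decompose
`1 / ∏_{i ∈ S} q_i^{c_i}`, by strong induction on `S`. If the `q_i`, `i ∈ S`, have no common
zero in `K̄^d`, the Nullstellensatz gives `1 = ∑ a_i q_i^{c_i}`, which splits the fraction into
fractions with one factor fewer. If they are algebraically dependent, so are the
`Q_i = q_i^{c_i}`; for a relation `∑ c_α Q^α = 0` and a monomial `β` of it that is minimal for the
componentwise order, `1 / ∏ Q_i = -∑_{α ≠ β} (c_α / c_β) Q^α / Q^{β + 1}`, and each such `α`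
exceeds `β` in some coordinate `i`, so that `Q_i` cancels from the denominator.
-/

open MvPolynomial

theorem AlgebraicIndependent.of_pow {ι R A : Type*} [CommRing R] [IsDomain R] [CommRing A]
    [Algebra R A] {x : ι → A} {n : ι → ℕ} (hn : ∀ i, n i ≠ 0)
    (hx : AlgebraicIndependent R fun i ↦ x i ^ n i) : AlgebraicIndependent R x := by
  let T := (aeval (R := R) fun i ↦ (X i ^ n i : MvPolynomial ι R)).range
  have hT : ∀ p : MvPolynomial ι R, IsIntegral T p := by
    intro p
    induction p using MvPolynomial.induction_on with
    | C a => exact isIntegral_algebraMap (R := T) (x := ⟨C a, C a, by simp⟩)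
    | add p p' hp hp' => exact hp.add hp'
    | mul_X p i hp =>
      exact hp.mul <| IsIntegral.of_pow (Nat.pos_of_ne_zero (hn i))
        (isIntegral_algebraMap (R := T) (x := ⟨X i ^ n i, X i, by simp⟩))
  rw [algebraicIndependent_iff] at hx ⊢
  intro κ hκ
  by_contra hκ0
  -- `MvPolynomial ι R` is integral over `T`, so the nonzero ideal of relations of `x` meets `T`;
  -- a relation of `x` lying in `T` is a relation of the `x i ^ n i`.
  obtain ⟨⟨_, κ', rfl⟩, hκ', hne⟩ := Submodule.ne_bot_iff _ |>.mp <|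
    Ideal.comap_ne_bot_of_integral_mem hκ0 (RingHom.mem_ker.mpr hκ) (hT κ)
  refine hne (Subtype.ext ?_)
  rw [hx κ' (by simpa [RingHom.mem_ker, aeval_bind₁] using hκ')]
  simp

theorem MvPolynomial.zeroLocus_nonempty_of_ne_top {K σ : Type*} [Field K] [Finite σ]
    {I : Ideal (MvPolynomial σ K)} (hI : I ≠ ⊤) :
    (zeroLocus (AlgebraicClosure K) I).Nonempty := by
  rw [Set.nonempty_iff_ne_empty]
  intro h
  have := vanishingIdeal_zeroLocus_eq_radical (K := AlgebraicClosure K) I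
  rw [h, vanishingIdeal_empty, eq_comm, Ideal.radical_eq_top] at this
  exact hI this

theorem MvPolynomial.span_image_pow_eq_top_of_no_common_zero {K σ ι : Type*} [Field K] [Finite σ]
    {q : ι → MvPolynomial σ K} {S : Finset ι} (c : ι → ℕ)
    (hS : ¬∃ x : σ → AlgebraicClosure K, ∀ i ∈ S, aeval x (q i) = 0) :
    Ideal.span ((fun i ↦ q i ^ c i) '' S) = ⊤ := by
  by_contra h
  obtain ⟨x, hx⟩ := zeroLocus_nonempty_of_ne_top h
  exact hS ⟨x, fun i hi ↦
    eq_zero_of_pow_eq_zero (by simpa using hx _ (Ideal.subset_span ⟨i, hi, rfl⟩))⟩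

section PartialFractions

variable {K A F ι : Type*} [Field K] [CommRing A] [Algebra K A] [Field F]
  [Algebra A F] [IsFractionRing A F]

theorem algebraMap_prod_pow_ne_zero {Q : ι → A} (hQ : ∀ i, Q i ≠ 0) (S : Finset ι)
    (v : ι → ℕ) : algebraMap A F (∏ i ∈ S, Q i ^ v i) ≠ 0 := by
  simp only [map_prod, map_pow]
  exact Finset.prod_ne_zero_iff.mpr fun i _ ↦
    pow_ne_zero _ (IsFractionRing.to_map_eq_zero_iff.not.mpr (hQ i))

theorem div_algebraMap_prod_pow_eq_of_le {Q : ι → A} (hQ : ∀ i, Q i ≠ 0) (P : A)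
    (S : Finset ι) {b b' : ι → ℕ} (h : ∀ i ∈ S, b i ≤ b' i) :
    algebraMap A F P / algebraMap A F (∏ i ∈ S, Q i ^ b i) =
      algebraMap A F (P * ∏ i ∈ S, Q i ^ (b' i - b i)) /
        algebraMap A F (∏ i ∈ S, Q i ^ b' i) := by
  have hprod : ∏ i ∈ S, Q i ^ b' i = (∏ i ∈ S, Q i ^ b i) * ∏ i ∈ S, Q i ^ (b' i - b i) := by
    rw [← Finset.prod_mul_distrib]
    exact Finset.prod_congr rfl fun i hi ↦ by rw [← pow_add, Nat.add_sub_cancel' (h i hi)]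
  rw [hprod, map_mul, map_mul, mul_div_mul_right _ _ (algebraMap_prod_pow_ne_zero hQ _ _)]

theorem inv_algebraMap_prod_mem_of_span_eq_top [DecidableEq ι] {M : Submodule A F}
    {Q : ι → A} {S : Finset ι} (hQ : ∀ i ∈ S, Q i ≠ 0) (hspan : Ideal.span (Q '' S) = ⊤)
    (hM : ∀ i ∈ S, (algebraMap A F (∏ j ∈ S.erase i, Q j))⁻¹ ∈ M) :
    (algebraMap A F (∏ j ∈ S, Q j))⁻¹ ∈ M := by
  obtain ⟨a, ha⟩ := (Submodule.mem_span_image_finset_iff_exists_fun' A).mp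
    (hspan ▸ Submodule.mem_top (x := (1 : A)))
  have hterm : ∀ i ∈ S, algebraMap A F (Q i) * (algebraMap A F (∏ j ∈ S, Q j))⁻¹ =
      (algebraMap A F (∏ j ∈ S.erase i, Q j))⁻¹ := fun i hi ↦ by
    rw [← Finset.mul_prod_erase S Q hi, map_mul, mul_inv, ← mul_assoc,
      mul_inv_cancel₀ (IsFractionRing.to_map_eq_zero_iff.not.mpr (hQ i hi)), one_mul]
  rw [← one_mul (_⁻¹), ← map_one (algebraMap A F), ← ha, map_sum, Finset.sum_mul]
  refine M.sum_mem fun i hi ↦ ?_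
  rw [smul_eq_mul, map_mul, mul_assoc, hterm i hi, ← Algebra.smul_def]
  exact M.smul_mem _ (hM i hi)

theorem div_algebraMap_prod_pow_mem_of_lt [Fintype ι] {M : Submodule A F} {Q : ι → A}
    (hQ : ∀ i, Q i ≠ 0) {α β : ι → ℕ} {i : ι} (hi : β i < α i)
    (hM : ∀ n : ι → ℕ, (∃ i, n i = 0) → (algebraMap A F (∏ j, Q j ^ n j))⁻¹ ∈ M) :
    algebraMap A F (∏ j, Q j ^ α j) / algebraMap A F (∏ j, Q j ^ (β j + 1)) ∈ M := by
  classical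
  let n j := if j = i then 0 else β j + 1
  have : algebraMap A F (∏ j, Q j ^ α j) / algebraMap A F (∏ j, Q j ^ (β j + 1)) =
      algebraMap A F (∏ j, Q j ^ (α j + n j - (β j + 1))) *
        (algebraMap A F (∏ j, Q j ^ n j))⁻¹ := by
    rw [← div_eq_mul_inv, div_eq_div_iff (algebraMap_prod_pow_ne_zero hQ _ _)
      (algebraMap_prod_pow_ne_zero hQ _ _), ← map_mul, ← map_mul,
      ← Finset.prod_mul_distrib, ← Finset.prod_mul_distrib]
    refine congrArg _ (Finset.prod_congr rfl fun j _ ↦ ?_)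
    rw [← pow_add, ← pow_add]
    congr 1
    by_cases hj : j = i <;> simp only [n, hj, if_true, if_false] <;> omega
  rw [this, ← Algebra.smul_def]
  exact M.smul_mem _ (hM n ⟨i, if_pos rfl⟩)

theorem inv_algebraMap_prod_eq_sum_of_aeval_eq_zero [Fintype ι] [DecidableEq ι] {Q : ι → A}
    (hQ : ∀ i, Q i ≠ 0) {κ : MvPolynomial ι K} (hκQ : aeval Q κ = 0) {β : ι →₀ ℕ}
    (hβ : β ∈ κ.support) :
    (algebraMap A F (∏ j, Q j))⁻¹ = ∑ α ∈ κ.support.erase β,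
      algebraMap K A (-(coeff α κ / coeff β κ)) •
        (algebraMap A F (∏ j, Q j ^ α j) / algebraMap A F (∏ j, Q j ^ (β j + 1))) := by
  set φ := algebraMap A F
  set ψ := φ.comp (algebraMap K A)
  have hrel : ∑ α ∈ κ.support, ψ (coeff α κ) * φ (∏ j, Q j ^ α j) = 0 := by
    rw [aeval_def, eval₂_eq'] at hκQ
    simpa [ψ, map_sum, map_mul] using congrArg φ hκQ
  have hsum : ∑ α ∈ κ.support.erase β, ψ (coeff α κ) * φ (∏ j, Q j ^ α j) =
      -(ψ (coeff β κ) * φ (∏ j, Q j ^ β j)) := by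
    rw [← Finset.add_sum_erase _ _ hβ] at hrel
    linear_combination hrel
  have hD : φ (∏ j, Q j ^ (β j + 1)) = φ (∏ j, Q j ^ β j) * φ (∏ j, Q j) := by
    rw [← map_mul, ← Finset.prod_mul_distrib]
    simp only [pow_succ]
  have hβψ : ψ (coeff β κ) ≠ 0 := (map_ne_zero ψ).mpr (mem_support_iff.mp hβ)
  calc (φ (∏ j, Q j))⁻¹
      = -(∑ α ∈ κ.support.erase β, ψ (coeff α κ) * φ (∏ j, Q j ^ α j)) /
          (ψ (coeff β κ) * φ (∏ j, Q j ^ (β j + 1))) := by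
        rw [hsum, neg_neg, hD, mul_div_mul_left _ _ hβψ,
          div_mul_cancel_left₀ (algebraMap_prod_pow_ne_zero hQ _ _)]
    _ = _ := by
        rw [neg_div, Finset.sum_div, ← Finset.sum_neg_distrib]
        refine Finset.sum_congr rfl fun α _ ↦ ?_
        rw [Algebra.smul_def]
        change _ = ψ _ * _
        rw [map_neg, map_div₀]
        field_simp

theorem inv_algebraMap_prod_mem_of_aeval_eq_zero [Fintype ι] {M : Submodule A F} {Q : ι → A}
    (hQ : ∀ i, Q i ≠ 0) {κ : MvPolynomial ι K} (hκ : κ ≠ 0) (hκQ : aeval Q κ = 0)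
    (hM : ∀ n : ι → ℕ, (∃ i, n i = 0) → (algebraMap A F (∏ j, Q j ^ n j))⁻¹ ∈ M) :
    (algebraMap A F (∏ j, Q j))⁻¹ ∈ M := by
  classical
  obtain ⟨β, hβ, hβmin⟩ := κ.support.finite_toSet.exists_minimal (support_nonempty.mpr hκ)
  rw [inv_algebraMap_prod_eq_sum_of_aeval_eq_zero hQ hκQ hβ]
  refine M.sum_mem fun α hα ↦ M.smul_mem _ ?_
  obtain ⟨hne, hα⟩ := Finset.mem_erase.mp hα
  -- By minimality of `β`, the monomial `α ≠ β` is not below `β`.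
  obtain ⟨i, hi⟩ : ∃ i, β i < α i := by
    by_contra! hle
    exact hne (le_antisymm (Finsupp.le_def.mpr hle) (hβmin hα (Finsupp.le_def.mpr hle)))
  exact div_algebraMap_prod_pow_mem_of_lt hQ hi hM

end PartialFractions

namespace Leinartas

variable {K σ ι : Type*} [Field K]

def IsAdmissible (q : ι → MvPolynomial σ K) (S : Finset ι) : Prop :=
  (∃ x : σ → AlgebraicClosure K, ∀ i ∈ S, aeval x (q i) = 0) ∧
    AlgebraicIndependent K (fun i : S ↦ q i)

noncomputable def admissibleSpan (q : ι → MvPolynomial σ K) :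
    Submodule (MvPolynomial σ K) (FractionRing (MvPolynomial σ K)) :=
  Submodule.span _ {f | ∃ (S : Finset ι) (b : ι → ℕ), IsAdmissible q S ∧ (∀ i ∈ S, b i ≠ 0) ∧
    f = (algebraMap _ _ (∏ i ∈ S, q i ^ b i))⁻¹}

def HasDecomposition [Fintype ι] (q : ι → MvPolynomial σ K)
    (f : FractionRing (MvPolynomial σ K)) : Prop :=
  ∃ (P : Finset ι → MvPolynomial σ K) (b : Finset ι → ι → ℕ),
    (∀ S i, i ∈ S → 1 ≤ b S i) ∧
    f = ∑ S : Finset ι, algebraMap (MvPolynomial σ K) _ (P S)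
      / algebraMap (MvPolynomial σ K) _ (∏ i ∈ S, q i ^ b S i) ∧
    ∀ S : Finset ι, P S ≠ 0 → IsAdmissible q S

section Decomposition

variable [Fintype ι] {q : ι → MvPolynomial σ K}

theorem hasDecomposition_zero : HasDecomposition q 0 :=
  ⟨0, fun _ _ ↦ 1, fun _ _ _ ↦ le_rfl, by simp, fun _ h ↦ absurd rfl h⟩

theorem hasDecomposition_inv_prod_pow {S : Finset ι} {b : ι → ℕ} (hS : IsAdmissible q S)
    (hb : ∀ i ∈ S, b i ≠ 0) :
    HasDecomposition q (algebraMap _ _ (∏ i ∈ S, q i ^ b i))⁻¹ := by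
  classical
  refine ⟨fun T ↦ if T = S then 1 else 0, fun T ↦ if T = S then b else 1, ?_, ?_, ?_⟩
  · intro T i hi
    dsimp only
    split_ifs with hT
    · exact Nat.one_le_iff_ne_zero.mpr (hb i (hT ▸ hi))
    · exact le_rfl
  · rw [Finset.sum_eq_single S (fun T _ hT ↦ by simp [hT]) (by simp)]
    simp
  · intro T hT
    obtain rfl : T = S := by_contra fun h ↦ hT (if_neg h)
    exact hS

theorem HasDecomposition.add (hq : ∀ i, q i ≠ 0) {f g : FractionRing (MvPolynomial σ K)}
    (hf : HasDecomposition q f) (hg : HasDecomposition q g) : HasDecomposition q (f + g) := by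
  obtain ⟨P₁, b₁, hb₁, rfl, hP₁⟩ := hf
  obtain ⟨P₂, b₂, hb₂, rfl, hP₂⟩ := hg
  refine ⟨fun S ↦ P₁ S * ∏ i ∈ S, q i ^ ((b₁ S ⊔ b₂ S) i - b₁ S i)
      + P₂ S * ∏ i ∈ S, q i ^ ((b₁ S ⊔ b₂ S) i - b₂ S i),
    fun S ↦ b₁ S ⊔ b₂ S, fun S i hi ↦ (hb₁ S i hi).trans le_sup_left, ?_, ?_⟩
  · rw [← Finset.sum_add_distrib]
    refine Finset.sum_congr rfl fun S _ ↦ ?_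
    rw [div_algebraMap_prod_pow_eq_of_le hq (P₁ S) S fun i _ ↦ le_sup_left (b := b₂ S i),
      div_algebraMap_prod_pow_eq_of_le hq (P₂ S) S fun i _ ↦ le_sup_right (a := b₁ S i),
      ← add_div, ← map_add]
    rfl
  · intro S hS
    by_cases h₁ : P₁ S = 0
    · exact hP₂ S fun h₂ ↦ hS (by simp [h₁, h₂])
    · exact hP₁ S h₁

theorem HasDecomposition.smul (c : MvPolynomial σ K) {f : FractionRing (MvPolynomial σ K)}
    (hf : HasDecomposition q f) : HasDecomposition q (c • f) := by
  obtain ⟨P, b, hb, rfl, hP⟩ := hf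
  refine ⟨fun S ↦ c * P S, b, hb, ?_, fun S hS ↦ hP S fun h ↦ hS (by simp [h])⟩
  rw [Finset.smul_sum]
  exact Finset.sum_congr rfl fun S _ ↦ by rw [Algebra.smul_def, map_mul, mul_div_assoc]

theorem hasDecomposition_of_mem_admissibleSpan (hq : ∀ i, q i ≠ 0)
    {f : FractionRing (MvPolynomial σ K)} (hf : f ∈ admissibleSpan q) : HasDecomposition q f := by
  unfold admissibleSpan at hf
  induction hf using Submodule.span_induction with
  | mem f hf =>
    obtain ⟨S, b, hS, hb, rfl⟩ := hf
    exact hasDecomposition_inv_prod_pow hS hb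
  | zero => exact hasDecomposition_zero
  | add f g _ _ hf hg => exact hf.add hq hg
  | smul c f _ hf => exact hf.smul c

end Decomposition

theorem inv_prod_pow_mem_admissibleSpan_of_not_algebraicIndependent [DecidableEq ι]
    {q : ι → MvPolynomial σ K} (hq : ∀ i, q i ≠ 0) {S : Finset ι} {c : ι → ℕ}
    (hc : ∀ i ∈ S, c i ≠ 0) (hind : ¬AlgebraicIndependent K fun i : S ↦ q i)
    (ih : ∀ T ⊂ S, ∀ c : ι → ℕ,
      (algebraMap _ (FractionRing (MvPolynomial σ K)) (∏ i ∈ T, q i ^ c i))⁻¹ ∈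
        admissibleSpan q) :
    (algebraMap _ (FractionRing (MvPolynomial σ K)) (∏ i ∈ S, q i ^ c i))⁻¹ ∈
      admissibleSpan q := by
  have hdep : ¬AlgebraicIndependent K fun i : S ↦ q i ^ c i :=
    fun h ↦ hind (h.of_pow fun i ↦ hc i i.2)
  rw [algebraicIndependent_iff] at hdep
  push Not at hdep
  obtain ⟨κ, hκQ, hκ⟩ := hdep
  rw [← Finset.prod_coe_sort]
  refine inv_algebraMap_prod_mem_of_aeval_eq_zero (fun i ↦ pow_ne_zero _ (hq i)) hκ hκQ
    fun n ⟨i, hi⟩ ↦ ?_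
  let n' j := if h : j ∈ S then n ⟨j, h⟩ else 0
  have : ∏ j : S, (q j ^ c j) ^ n j = ∏ j ∈ S.erase i, q j ^ (c j * n' j) := by
    rw [Finset.prod_erase _ (by simp [n', hi]), ← Finset.prod_coe_sort S]
    exact Finset.prod_congr rfl fun j _ ↦ by simp [n', pow_mul, j.2]
  rw [this]
  exact ih _ (Finset.erase_ssubset i.2) _

theorem inv_prod_pow_mem_admissibleSpan [Finite σ] [DecidableEq ι] {q : ι → MvPolynomial σ K}
    (hq : ∀ i, q i ≠ 0) (S : Finset ι) (c : ι → ℕ) :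
    (algebraMap _ (FractionRing (MvPolynomial σ K)) (∏ i ∈ S, q i ^ c i))⁻¹ ∈
      admissibleSpan q := by
  induction S using Finset.strongInduction generalizing c with
  | H S ih =>
  by_cases hc : ∃ i ∈ S, c i = 0
  · obtain ⟨i, hi, hci⟩ := hc
    rw [← Finset.prod_erase _ (by rw [hci, pow_zero])]
    exact ih _ (Finset.erase_ssubset hi) c
  push Not at hc
  by_cases hz : ∃ x : σ → AlgebraicClosure K, ∀ i ∈ S, aeval x (q i) = 0
  · by_cases hind : AlgebraicIndependent K fun i : S ↦ q i
    · exact Submodule.subset_span ⟨S, c, ⟨hz, hind⟩, hc, rfl⟩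
    · exact inv_prod_pow_mem_admissibleSpan_of_not_algebraicIndependent hq hc hind ih
  · exact inv_algebraMap_prod_mem_of_span_eq_top (fun i _ ↦ pow_ne_zero _ (hq i))
      (span_image_pow_eq_top_of_no_common_zero c hz) fun i hi ↦ ih _ (Finset.erase_ssubset hi) c

end Leinartas

theorem leinartas_decomposition_general
    {K : Type*} [Field K] {d m : ℕ}
    (p : MvPolynomial (Fin d) K)
    (q : Fin m → MvPolynomial (Fin d) K)
    (hqirr : ∀ i, Irreducible (q i))
    (e : Fin m → ℕ)
    (f : FractionRing (MvPolynomial (Fin d) K))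
    (hf : f = algebraMap (MvPolynomial (Fin d) K) _ p
      / algebraMap (MvPolynomial (Fin d) K) _ (∏ i, q i ^ e i)) :
    ∃ (P : Finset (Fin m) → MvPolynomial (Fin d) K)
      (b : Finset (Fin m) → Fin m → ℕ),
      (∀ S i, i ∈ S → 1 ≤ b S i) ∧
      f = ∑ S : Finset (Fin m),
        algebraMap (MvPolynomial (Fin d) K) _ (P S)
          / algebraMap (MvPolynomial (Fin d) K) _ (∏ i ∈ S, q i ^ b S i) ∧
      ∀ S : Finset (Fin m), P S ≠ 0 →
        (∃ x : Fin d → AlgebraicClosure K, ∀ i ∈ S, aeval x (q i) = 0) ∧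
        AlgebraicIndependent K (fun i : S => q i) := by
  have hq : ∀ i, q i ≠ 0 := fun i ↦ (hqirr i).ne_zero
  refine Leinartas.hasDecomposition_of_mem_admissibleSpan hq ?_
  rw [hf, div_eq_mul_inv, ← Algebra.smul_def]
  exact Submodule.smul_mem _ p (Leinartas.inv_prod_pow_mem_admissibleSpan hq _ e)

/-- Leinartas' theorem: a rational function `f = p/q` with
`q = q₁^{e₁} ⋯ q_m^{e_m}` a product of pairwise non-associated irreducible polynomials can be
written as a sum of terms `p_S / ∏_{i∈S} q_i^{b_{S,i}}` over subsets `S ⊆ {1,…,m}` such that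
for every occurring `S` the polynomials `{q_i | i ∈ S}` have a common zero in `K̄^d` and are
algebraically independent over `K`. -/
theorem leinartas_decomposition
    {K : Type*} [Field K] {d m : ℕ}
    (p : MvPolynomial (Fin d) K)
    (q : Fin m → MvPolynomial (Fin d) K)
    (hqirr : ∀ i, Irreducible (q i))
    (hqass : ∀ i i', i ≠ i' → ¬ Associated (q i) (q i'))
    (e : Fin m → ℕ) (he : ∀ i, 1 ≤ e i)
    (f : FractionRing (MvPolynomial (Fin d) K))
    (hf : f = algebraMap (MvPolynomial (Fin d) K) _ p
      / algebraMap (MvPolynomial (Fin d) K) _ (∏ i, q i ^ e i)) :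
    ∃ (P : Finset (Fin m) → MvPolynomial (Fin d) K)
      (b : Finset (Fin m) → Fin m → ℕ),
      (∀ S i, i ∈ S → 1 ≤ b S i) ∧
      f = ∑ S : Finset (Fin m),
        algebraMap (MvPolynomial (Fin d) K) _ (P S)
          / algebraMap (MvPolynomial (Fin d) K) _ (∏ i ∈ S, q i ^ b S i) ∧
      ∀ S : Finset (Fin m), P S ≠ 0 →
        (∃ x : Fin d → AlgebraicClosure K, ∀ i ∈ S, aeval x (q i) = 0) ∧
        AlgebraicIndependent K (fun i : S => q i) :=
  leinartas_decomposition_general p q hqirr e f hf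
end
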